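/- arXiv:2601.11892 — 2 statements merged into one kernel-verified Lean document; each statement's English description precedes it below -/
import Mathlib

section
/- The generalized continued fraction with partial numerators a_1 = 1, a_n = (2n−3)² for n ≥ 2, and partial denominators b_1 = 1, b_n = 2 for n ≥ 2 converges to π/4. -/
/-!
Euler's continued fraction formula: for `0 < x 0 < x 1 < ⋯`, the alternating sum
`1/x₀ - 1/x₁ + ⋯ ± 1/xₙ₋₁` is the `n`-th convergent of
`1/(x₀ + x₀²/(x₁ - x₀ + x₁²/(x₂ - x₁ + ⋯)))`.
With `xᵢ = 2i + 1` these are the partial sums of Leibniz's series for `π/4`.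
The formula follows by induction on the depth, from the inside out: the tail of the continued
fraction starting at `x_k²` equals `1/T - x_k`, where `T` is the tail of the alternating sum
starting at `1/x_k`.
-/

/-- `cfAux a b k m` : finite continued fraction with `m` levels starting at index `k`. -/
noncomputable def cfAux (a b : ℕ → ℝ) : ℕ → ℕ → ℝ
  | _, 0 => 0
  | k, m + 1 => a k / (b k + cfAux a b (k + 1) m)

/-- The `n`-th convergent `a 1 / (b 1 + a 2 / (b 2 + ⋯ + a n / b n))`. -/
noncomputable def convergent (a b : ℕ → ℝ) (n : ℕ) : ℝ := cfAux a b 1 n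

open Finset

noncomputable def altSum (x : ℕ → ℝ) (k n : ℕ) : ℝ :=
  ∑ i ∈ range n, (-1 : ℝ) ^ i / x (k + i)

lemma altSum_zero (x : ℕ → ℝ) (k : ℕ) : altSum x k 0 = 0 := by
  simp [altSum]

lemma altSum_succ (x : ℕ → ℝ) (k n : ℕ) :
    altSum x k (n + 1) = 1 / x k - altSum x (k + 1) n := by
  rw [altSum, altSum, sum_range_succ', sub_eq_neg_add, ← sum_neg_distrib]
  congr 1
  refine sum_congr rfl fun i _ => ?_
  rw [show k + (i + 1) = k + 1 + i by ring, pow_succ]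
  ring

section StrictMono

variable {x : ℕ → ℝ} (hx : ∀ i, 0 < x i) (hmono : StrictMono x)
include hx hmono

lemma altSum_succ_pos_and_le (n k : ℕ) :
    0 < altSum x k (n + 1) ∧ altSum x k (n + 1) ≤ 1 / x k := by
  induction n generalizing k with
  | zero => simp [altSum_succ, altSum_zero, hx k]
  | succ n ih =>
    obtain ⟨hpos, hle⟩ := ih (k + 1)
    have hlt : 1 / x (k + 1) < 1 / x k :=
      one_div_lt_one_div_of_lt (hx k) (hmono (Nat.lt_succ_self k))
    rw [altSum_succ]
    constructor <;> linarith

variable {a b : ℕ → ℝ} (ha : ∀ k, a (k + 2) = x k ^ 2) (hb : ∀ k, b (k + 2) = x (k + 1) - x k)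
include ha hb

lemma cfAux_eq_inv_altSum_sub (m k : ℕ) :
    cfAux a b (k + 2) m = (altSum x k (m + 1))⁻¹ - x k := by
  induction m generalizing k with
  | zero => simp [cfAux, altSum_succ, altSum_zero]
  | succ m ih =>
    obtain ⟨hT, hTle⟩ := altSum_succ_pos_and_le hx hmono m (k + 1)
    have hxk := hx k
    have hxT : x k * altSum x (k + 1) (m + 1) < 1 := by
      rw [← lt_div_iff₀' hxk]
      exact hTle.trans_lt (one_div_lt_one_div_of_lt hxk (hmono (Nat.lt_succ_self k)))
    have h := ih (k + 1)
    rw [show k + 1 + 2 = k + 2 + 1 by ring] at h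
    rw [cfAux, h, ha, hb, altSum_succ x k (m + 1)]
    generalize altSum x (k + 1) (m + 1) = T at hT hxT ⊢
    have hden : x (k + 1) - x k + (T⁻¹ - x (k + 1)) = (1 - x k * T) / T := by
      field_simp; ring
    have htail : 1 / x k - T = (1 - x k * T) / x k := by field_simp
    have hxT' : 1 - x k * T ≠ 0 := by linarith
    rw [hden, htail]
    field_simp
    ring

lemma convergent_eq_altSum (ha1 : a 1 = 1) (hb1 : b 1 = x 0) (n : ℕ) :
    convergent a b n = altSum x 0 n := by
  cases n with
  | zero => simp [convergent, cfAux, altSum_zero]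
  | succ n =>
    have hT := (altSum_succ_pos_and_le hx hmono n 0).1
    rw [convergent, cfAux, cfAux_eq_inv_altSum_sub hx hmono ha hb, ha1, hb1]
    field_simp
    ring

end StrictMono

theorem stmt_15 (a b : ℕ → ℝ)
    (ha1 : a 1 = 1) (ha : ∀ n, 2 ≤ n → a n = (2*(n : ℝ) - 3)^2)
    (hb1 : b 1 = 1) (hb : ∀ n, 2 ≤ n → b n = 2) :
    Filter.Tendsto (fun n => convergent a b n) Filter.atTop (nhds (Real.pi / 4)) := by
  let x : ℕ → ℝ := fun i => 2 * i + 1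
  have hx : ∀ i, 0 < x i := fun i => by positivity
  have hmono : StrictMono x := fun i j hij => by simp only [x]; gcongr
  have ha' : ∀ k, a (k + 2) = x k ^ 2 := fun k => by
    rw [ha _ (by omega)]; push_cast; ring
  have hb' : ∀ k, b (k + 2) = x (k + 1) - x k := fun k => by
    rw [hb _ (by omega)]; simp only [x]; push_cast; ring
  have hb1' : b 1 = x 0 := by simp [x, hb1]
  simpa only [convergent_eq_altSum hx hmono ha' hb' ha1 hb1', altSum, zero_add, x]
    using Real.tendsto_sum_pi_div_four
end

section
/- The generalized continued fraction with partial numerators a_1 = 1, a_n = (n−1)² for n ≥ 2, and partial denominators b_n = −(2n−1) for n ≥ 1 converges, and its value is −π/4. -/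
/-! Flipping the sign of every `b n`, the convergents become `p n / q n`, where `p` and `q` satisfy
the continuant recurrence `u (n + 2) = (2n + 3) u (n + 1) + (n + 1)² u n`. The integrals
`I n = ∫_{-1}^{1} (1 - t²)^n / (-2 (1 + i t))^(n + 1) dt` satisfy
`(n + 2) I (n + 2) = (2n + 3) I (n + 1) + (n + 1) I n` (differentiate an explicit primitive), so
`n! I n` obeys the same recurrence as `p` and `q`; comparing initial values,
`p n - q n π / 4 = n! I n`. As `‖I n‖ ≤ 2⁻ⁿ` and `q n ≥ n!`, we get `|p n / q n - π / 4| ≤ 2⁻ⁿ`. -/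

open GenContFract Stream'.Seq MeasureTheory

lemma cfAux_neg_right (a b : ℕ → ℝ) (k n : ℕ) : cfAux a (-b) k n = -cfAux a b k n := by
  induction n generalizing k with
  | zero => simp [cfAux]
  | succ n ih => simp only [cfAux, ih, Pi.neg_apply]; rw [← neg_add, div_neg]

lemma convergent_neg_right (a b : ℕ → ℝ) (n : ℕ) : convergent a (-b) n = -convergent a b n :=
  cfAux_neg_right a b 1 n

lemma cfAux_eq_convs'Aux (a b : ℕ → ℝ) (k n : ℕ) :
    cfAux a b k n = convs'Aux (ofStream fun j => ⟨a (j + k), b (j + k)⟩) n := by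
  induction n generalizing k with
  | zero => rfl
  | succ n ih =>
    have htail : Stream'.tail (fun j => (⟨a (j + k), b (j + k)⟩ : Pair ℝ)) =
        fun j => ⟨a (j + (k + 1)), b (j + (k + 1))⟩ := by
      funext j; simp only [Stream'.tail, Stream'.get, add_right_comm, add_assoc]
    rw [← Stream'.eta (fun j => (⟨a (j + k), b (j + k)⟩ : Pair ℝ)), ofStream_cons,
      convs'Aux_succ_some (head_cons _ _), tail_cons, htail, cfAux, ih]
    simp [Stream'.head, Stream'.get]

noncomputable def toGenContFract (a b : ℕ → ℝ) : GenContFract ℝ :=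
  ⟨0, ofStream fun j => ⟨a (j + 1), b (j + 1)⟩⟩

lemma convergent_eq_convs' (a b : ℕ → ℝ) (n : ℕ) :
    convergent a b n = (toGenContFract a b).convs' n := by
  simp [convergent, convs', toGenContFract, cfAux_eq_convs'Aux]

lemma toGenContFract_s_get (a b : ℕ → ℝ) (n : ℕ) :
    (toGenContFract a b).s.get? n = some ⟨a (n + 1), b (n + 1)⟩ :=
  rfl

-- Positivity keeps every tail of the fraction nonzero, so no junk value `x / 0 = 0` intervenes.
theorem convergent_eq_div_of_recurrence {a b P Q : ℕ → ℝ}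
    (hab : ∀ k, 1 ≤ k → 0 < a k ∧ 0 < b k)
    (hP0 : P 0 = 0) (hP1 : P 1 = a 1)
    (hP : ∀ n, P (n + 2) = b (n + 2) * P (n + 1) + a (n + 2) * P n)
    (hQ0 : Q 0 = 1) (hQ1 : Q 1 = b 1)
    (hQ : ∀ n, Q (n + 2) = b (n + 2) * Q (n + 1) + a (n + 2) * Q n) (n : ℕ) :
    convergent a b n = P n / Q n := by
  set g := toGenContFract a b
  have hnums : ∀ n, g.nums n = P n := by
    intro n
    induction n using Nat.twoStepInduction with
    | zero => simp [zeroth_num_eq_h, g, toGenContFract, hP0]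
    | one =>
      rw [first_num_eq (toGenContFract_s_get a b 0), hP1]
      simp [toGenContFract]
    | more n ih ih1 => rw [nums_recurrence (toGenContFract_s_get a b (n + 1)) ih ih1, hP]
  have hdens : ∀ n, g.dens n = Q n := by
    intro n
    induction n using Nat.twoStepInduction with
    | zero => simp [zeroth_den_eq_one, hQ0]
    | one => simp [g, first_den_eq (toGenContFract_s_get a b 0), hQ1]
    | more n ih ih1 => rw [dens_recurrence (toGenContFract_s_get a b (n + 1)) ih ih1, hQ]
  have hpos : ∀ {gp : Pair ℝ} {m : ℕ}, m < n → g.s.get? m = some gp → 0 < gp.a ∧ 0 < gp.b := by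
    intro gp m _ hm
    rw [toGenContFract_s_get, Option.some_inj] at hm
    exact hm ▸ hab (m + 1) (by omega)
  rw [convergent_eq_convs', ← convs_eq_convs' hpos, conv_eq_num_div_den, hnums, hdens]

open Complex (I)

noncomputable def quarterPiKernel (n : ℕ) (z : ℂ) : ℂ :=
  (1 - z ^ 2) ^ n / (-2 * (1 + z * I)) ^ (n + 1)

noncomputable def quarterPiIntegral (n : ℕ) : ℂ := ∫ t in (-1 : ℝ)..1, quarterPiKernel n t

lemma one_le_norm_one_add_ofReal_mul_I (t : ℝ) : 1 ≤ ‖1 + (t : ℂ) * I‖ := by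
  simpa using Complex.re_le_norm (1 + (t : ℂ) * I)

lemma one_add_ofReal_mul_I_ne_zero (t : ℝ) : 1 + (t : ℂ) * I ≠ 0 :=
  norm_pos_iff.mp ((one_le_norm_one_add_ofReal_mul_I t).trans_lt' one_pos)

lemma neg_two_mul_one_add_ofReal_mul_I_ne_zero (t : ℝ) : -2 * (1 + (t : ℂ) * I) ≠ 0 :=
  mul_ne_zero (by norm_num) (one_add_ofReal_mul_I_ne_zero t)

lemma continuous_quarterPiKernel (n : ℕ) : Continuous fun t : ℝ => quarterPiKernel n t :=
  Continuous.div (by fun_prop) (by fun_prop)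
    fun t => pow_ne_zero _ (neg_two_mul_one_add_ofReal_mul_I_ne_zero t)

noncomputable def quarterPiPrimitive (n : ℕ) (z : ℂ) : ℂ :=
  I / 8 * ((1 - z ^ 2) ^ (n + 1) * ((-2 * (1 + z * I)) ^ 2 - 8) / (-2 * (1 + z * I)) ^ (n + 2))

lemma hasDerivAt_quarterPiPrimitive (n : ℕ) (z : ℂ) (hw : -2 * (1 + z * I) ≠ 0) :
    HasDerivAt (quarterPiPrimitive n)
      ((n + 2) * quarterPiKernel (n + 2) z - (2 * n + 3) * quarterPiKernel (n + 1) z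
        - (n + 1) * quarterPiKernel n z) z := by
  have hu : HasDerivAt (fun z : ℂ => (1 - z ^ 2) ^ (n + 1))
      ((n + 1 : ℕ) * (1 - z ^ 2) ^ n * (-2 * z)) z := by
    simpa using ((hasDerivAt_pow 2 z).const_sub 1).fun_pow (n + 1)
  have hw' : HasDerivAt (fun z : ℂ => -2 * (1 + z * I)) (-2 * I) z := by
    simpa using (((hasDerivAt_id z).mul_const I).const_add 1).const_mul (-2 : ℂ)
  refine (((hu.mul ((hw'.fun_pow 2).sub_const 8)).div (hw'.fun_pow (n + 2))
    (pow_ne_zero _ hw)).const_mul (I / 8)).congr_deriv ?_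
  simp only [quarterPiKernel, Pi.mul_apply]
  -- after substituting `z = I (w + 2) / 2`, the unit `I` survives only in even powers
  generalize hwdef : -2 * (1 + z * I) = w at hw ⊢
  obtain rfl : z = I * (w + 2) / 2 := by rw [← hwdef]; ring_nf; rw [Complex.I_sq]; ring
  field_simp
  push_cast
  ring_nf
  simp only [Complex.I_sq, Complex.I_pow_four]
  ring

lemma quarterPiIntegral_add_two (n : ℕ) :
    (n + 2) * quarterPiIntegral (n + 2) =
      (2 * n + 3) * quarterPiIntegral (n + 1) + (n + 1) * quarterPiIntegral n := by
  have hint : ∀ m (c : ℂ),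
      IntervalIntegrable (fun t : ℝ => c * quarterPiKernel m t) volume (-1) 1 := fun m c =>
    (continuous_const.mul (continuous_quarterPiKernel m)).intervalIntegrable _ _
  have hFTC := intervalIntegral.integral_eq_sub_of_hasDerivAt
    (fun t _ => (hasDerivAt_quarterPiPrimitive n t
      (neg_two_mul_one_add_ofReal_mul_I_ne_zero t)).comp_ofReal)
    (((hint (n + 2) _).sub (hint (n + 1) _)).sub (hint n _))
  have hvanish : ∀ t : ℝ, t ^ 2 = 1 → quarterPiPrimitive n t = 0 := fun t ht => by
    simp [quarterPiPrimitive, ← Complex.ofReal_pow, ht]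
  rw [hvanish 1 (by norm_num), hvanish (-1) (by norm_num), sub_zero,
    intervalIntegral.integral_sub (((hint _ _).sub (hint _ _))) (hint _ _),
    intervalIntegral.integral_sub (hint _ _) (hint _ _)] at hFTC
  simp only [intervalIntegral.integral_const_mul] at hFTC
  simp only [quarterPiIntegral]
  linear_combination hFTC

lemma quarterPiKernel_zero_add_neg (t : ℝ) :
    quarterPiKernel 0 t + quarterPiKernel 0 (-t : ℝ) = ((-(1 / (1 + t ^ 2)) : ℝ) : ℂ) := by
  have h₁ := one_add_ofReal_mul_I_ne_zero t
  have h₂ : 1 - (t : ℂ) * I ≠ 0 := by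
    simpa [sub_eq_add_neg] using one_add_ofReal_mul_I_ne_zero (-t)
  have h₃ : (1 + (t : ℂ) ^ 2) ≠ 0 := by exact_mod_cast (by positivity : (1 + t ^ 2 : ℝ) ≠ 0)
  push_cast
  simp only [quarterPiKernel, pow_zero, zero_add, pow_one, neg_mul, ← sub_eq_add_neg]
  field_simp
  linear_combination (-2 * (t : ℂ) ^ 2) * Complex.I_sq

lemma quarterPiIntegral_zero : quarterPiIntegral 0 = -(Real.pi / 4 : ℝ) := by
  have hcont := continuous_quarterPiKernel 0
  have hsymm : ∫ t in (-1 : ℝ)..1, quarterPiKernel 0 (-t : ℝ) = quarterPiIntegral 0 := by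
    simpa [quarterPiIntegral] using
      intervalIntegral.integral_comp_neg (a := -1) (b := 1) fun t : ℝ => quarterPiKernel 0 t
  have hsum := intervalIntegral.integral_add (hcont.intervalIntegrable (μ := volume) (-1) 1)
    ((hcont.comp continuous_neg).intervalIntegrable (-1) 1)
  simp only [Function.comp_def, quarterPiKernel_zero_add_neg, intervalIntegral.integral_ofReal,
    intervalIntegral.integral_neg, integral_one_div_one_add_sq, hsymm] at hsum
  rw [Real.arctan_neg, Real.arctan_one] at hsum
  simp only [quarterPiIntegral] at hsum ⊢
  push_cast at hsum ⊢
  linear_combination -hsum / 2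

lemma hasDerivAt_primitive_quarterPiKernel_one_sub_zero (z : ℂ) (hz : 1 + z * I ≠ 0) :
    HasDerivAt (fun z => z / 4 + I / (2 * (1 + z * I)))
      (quarterPiKernel 1 z - quarterPiKernel 0 z) z := by
  have hw : HasDerivAt (fun z : ℂ => 2 * (1 + z * I)) (2 * I) z := by
    simpa using (((hasDerivAt_id z).mul_const I).const_add 1).const_mul (2 : ℂ)
  refine (((hasDerivAt_id z).div_const 4).add ((hasDerivAt_const z I).div hw
    (mul_ne_zero two_ne_zero hz))).congr_deriv ?_
  simp only [quarterPiKernel, pow_zero, pow_one, zero_add, one_add_one_eq_two]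
  field_simp
  linear_combination (4 * z ^ 2 - 8) * Complex.I_sq

lemma quarterPiIntegral_one : quarterPiIntegral 1 = quarterPiIntegral 0 + 1 := by
  have hint : ∀ m, IntervalIntegrable (fun t : ℝ => quarterPiKernel m t) volume (-1) 1 :=
    fun m => (continuous_quarterPiKernel m).intervalIntegrable _ _
  have hFTC := intervalIntegral.integral_eq_sub_of_hasDerivAt
    (fun t _ => (hasDerivAt_primitive_quarterPiKernel_one_sub_zero t
      (one_add_ofReal_mul_I_ne_zero t)).comp_ofReal)
    ((hint 1).sub (hint 0))
  rw [intervalIntegral.integral_sub (hint 1) (hint 0)] at hFTC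
  simp only [quarterPiIntegral]
  rw [← sub_eq_iff_eq_add', hFTC]
  have h₁ : (1 : ℂ) + I ≠ 0 := by simpa using one_add_ofReal_mul_I_ne_zero 1
  have h₂ : (1 : ℂ) - I ≠ 0 := by
    simpa [sub_eq_add_neg] using one_add_ofReal_mul_I_ne_zero (-1)
  push_cast
  simp only [neg_mul, one_mul, ← sub_eq_add_neg]
  field_simp
  linear_combination -4 * Complex.I_sq

lemma norm_quarterPiKernel_le (n : ℕ) {t : ℝ} (ht : |t| ≤ 1) :
    ‖quarterPiKernel n t‖ ≤ (1 / 2) ^ (n + 1) := by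
  have hnum : ‖1 - (t : ℂ) ^ 2‖ ≤ 1 := by
    rw [← Complex.ofReal_one, ← Complex.ofReal_pow, ← Complex.ofReal_sub, Complex.norm_real,
      Real.norm_eq_abs, abs_le]
    constructor <;> nlinarith [abs_le.mp ht, sq_abs t]
  have hden : 2 ≤ ‖-2 * (1 + (t : ℂ) * I)‖ := by
    rw [norm_mul, norm_neg, Complex.norm_two]
    linarith [one_le_norm_one_add_ofReal_mul_I t]
  rw [quarterPiKernel, norm_div, norm_pow, norm_pow, div_pow, one_pow]
  calc ‖1 - (t : ℂ) ^ 2‖ ^ n / ‖-2 * (1 + (t : ℂ) * I)‖ ^ (n + 1)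
      ≤ 1 ^ n / 2 ^ (n + 1) := by gcongr
    _ = 1 / 2 ^ (n + 1) := by rw [one_pow]

lemma norm_quarterPiIntegral_le (n : ℕ) : ‖quarterPiIntegral n‖ ≤ (1 / 2) ^ n := by
  have := intervalIntegral.norm_integral_le_of_norm_le_const (a := -1) (b := 1)
    (C := (1 / 2) ^ (n + 1)) fun t ht => by
    rw [Set.uIoc_of_le (by norm_num)] at ht
    exact norm_quarterPiKernel_le n (abs_le.mpr ⟨ht.1.le, ht.2⟩)
  rw [quarterPiIntegral]
  refine this.trans_eq ?_
  norm_num [pow_succ, mul_assoc]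

noncomputable def quarterPiNums : ℕ → ℝ
  | 0 => 0
  | 1 => 1
  | n + 2 => (2 * n + 3) * quarterPiNums (n + 1) + (n + 1) ^ 2 * quarterPiNums n

noncomputable def quarterPiDens : ℕ → ℝ
  | 0 => 1
  | 1 => 1
  | n + 2 => (2 * n + 3) * quarterPiDens (n + 1) + (n + 1) ^ 2 * quarterPiDens n

lemma quarterPiNums_sub_dens_mul_pi_div_four (n : ℕ) :
    ((quarterPiNums n - quarterPiDens n * (Real.pi / 4) : ℝ) : ℂ) =
      n.factorial * quarterPiIntegral n := by
  induction n using Nat.twoStepInduction with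
  | zero => simp [quarterPiNums, quarterPiDens, quarterPiIntegral_zero]
  | one => simp [quarterPiNums, quarterPiDens, quarterPiIntegral_one, quarterPiIntegral_zero]; ring
  | more n ih ih1 =>
    simp only [quarterPiNums, quarterPiDens, Nat.factorial_succ] at ih ih1 ⊢
    push_cast at ih ih1 ⊢
    linear_combination (2 * (n : ℂ) + 3) * ih1 + ((n : ℂ) + 1) ^ 2 * ih
      - ((n : ℂ) + 1) * n.factorial * quarterPiIntegral_add_two n

lemma factorial_le_quarterPiDens (n : ℕ) : (n.factorial : ℝ) ≤ quarterPiDens n := by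
  induction n using Nat.twoStepInduction with
  | zero => simp [quarterPiDens]
  | one => simp [quarterPiDens]
  | more n ih ih1 =>
    have hfac : (0 : ℝ) < n.factorial := by exact_mod_cast n.factorial_pos
    simp only [quarterPiDens, Nat.factorial_succ] at ih1 ⊢
    push_cast at ih1 ⊢
    nlinarith

lemma abs_quarterPiNums_div_dens_sub_le (n : ℕ) :
    |quarterPiNums n / quarterPiDens n - Real.pi / 4| ≤ (1 / 2) ^ n := by
  have hfac : (0 : ℝ) < n.factorial := by exact_mod_cast n.factorial_pos
  have hq := factorial_le_quarterPiDens n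
  have hq_pos := hfac.trans_le hq
  have herr : |quarterPiNums n - quarterPiDens n * (Real.pi / 4)| ≤
      n.factorial * (1 / 2) ^ n := by
    rw [← Real.norm_eq_abs, ← Complex.norm_real, quarterPiNums_sub_dens_mul_pi_div_four, norm_mul,
      Complex.norm_natCast]
    gcongr
    exact norm_quarterPiIntegral_le n
  rw [div_sub' hq_pos.ne', abs_div, abs_of_pos hq_pos, div_le_iff₀ hq_pos]
  calc _ ≤ n.factorial * (1 / 2 : ℝ) ^ n := herr
    _ ≤ (1 / 2) ^ n * quarterPiDens n := by rw [mul_comm]; gcongr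

lemma tendsto_quarterPiNums_div_dens :
    Filter.Tendsto (fun n => quarterPiNums n / quarterPiDens n) Filter.atTop
      (nhds (Real.pi / 4)) := by
  refine tendsto_iff_norm_sub_tendsto_zero.mpr (squeeze_zero (fun _ => norm_nonneg _)
    (fun n => abs_quarterPiNums_div_dens_sub_le n) ?_)
  exact tendsto_pow_atTop_nhds_zero_of_lt_one (by norm_num) (by norm_num)

lemma convergent_eq_neg_quarterPiNums_div_dens (a b : ℕ → ℝ)
    (ha1 : a 1 = 1) (ha : ∀ n, 2 ≤ n → a n = ((n : ℝ) - 1)^2)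
    (hb : ∀ n, 1 ≤ n → b n = -(2*(n : ℝ) - 1)) (n : ℕ) :
    convergent a b n = -(quarterPiNums n / quarterPiDens n) := by
  have hab : ∀ k, 1 ≤ k → 0 < a k ∧ 0 < (-b) k := by
    intro k hk
    rw [Pi.neg_apply, hb k hk, neg_neg]
    refine ⟨?_, by linarith [(Nat.one_le_cast (α := ℝ)).mpr hk]⟩
    rcases hk.eq_or_lt with rfl | hk
    · rw [ha1]; exact one_pos
    · rw [ha k hk]
      have : (1 : ℝ) < k := by exact_mod_cast hk
      positivity
  have hb2 : ∀ n : ℕ, (-b) (n + 2) = 2 * n + 3 := fun n => by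
    rw [Pi.neg_apply, hb _ (by omega)]; push_cast; ring
  have ha2 : ∀ n : ℕ, a (n + 2) = (n + 1) ^ 2 := fun n => by
    rw [ha _ (by omega)]; push_cast; ring
  have hb1 : (-b) 1 = 1 := by rw [Pi.neg_apply, hb 1 le_rfl]; norm_num
  have hconv : convergent a (-b) n = quarterPiNums n / quarterPiDens n :=
    convergent_eq_div_of_recurrence hab rfl (by rw [ha1]; rfl)
      (fun n => by rw [hb2, ha2]; rfl) rfl (by rw [hb1]; rfl) (fun n => by rw [hb2, ha2]; rfl) n
  rw [← hconv, ← convergent_neg_right, neg_neg]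

theorem stmt_16 (a b : ℕ → ℝ)
    (ha1 : a 1 = 1) (ha : ∀ n, 2 ≤ n → a n = ((n : ℝ) - 1)^2)
    (hb : ∀ n, 1 ≤ n → b n = -(2*(n : ℝ) - 1)) :
    Filter.Tendsto (fun n => convergent a b n) Filter.atTop (nhds (-(Real.pi / 4))) := by
  simp only [convergent_eq_neg_quarterPiNums_div_dens a b ha1 ha hb]
  exact tendsto_quarterPiNums_div_dens.neg
end
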